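/- arXiv:1301.6447 — 2 statements merged into one kernel-verified Lean document; each statement's English description precedes it below -/
import Mathlib

section
/- There exist absolute constants C > 0 and ε₀, δ₀ > 0 such that the following holds. Let N ≥ 2, let h ∈ ℝ^N, let H be the circular convolution matrix of h, and relabel the Fourier coefficients of h so that |ĥ₀| ≥ |ĥ₁| ≥ … ≥ |ĥ_{N−1}|. Then for all ε ≤ ε₀ and δ ≤ δ₀, every (ε,δ)-differentially private algorithm 𝒜 approximating x ↦ Hx has worst-case mean squared error sup_{x} (1/N)·E[‖𝒜(x) − Hx‖₂²] ≥ C · max_{K=1,…,N} K²·ĥ²_{K−1} / (N·(log₂ N)²). -/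
open MeasureTheory Finset
open scoped ENNReal NNReal

noncomputable section

/-- `(ε,δ)`-differential privacy for a randomized algorithm mapping inputs in `[0,1]^N`
(ℓ₁-neighboring inputs differ by at most 1 in ℓ₁ norm) to probability measures on `Ω`. -/
def DiffPrivate {N : ℕ} {Ω : Type*} [MeasurableSpace Ω]
    (A : (Fin N → ℝ) → Measure Ω) (ε δ : ℝ) : Prop :=
  ∀ x x' : Fin N → ℝ,
    (∀ i, x i ∈ Set.Icc (0 : ℝ) 1) → (∀ i, x' i ∈ Set.Icc (0 : ℝ) 1) →
    (∑ i, |x i - x' i|) ≤ 1 →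
    ∀ T : Set Ω, MeasurableSet T →
      A x T ≤ ENNReal.ofReal (Real.exp ε) * A x' T + ENNReal.ofReal δ

/-- The normalized DFT matrix `(F_N)_{m,n} = N^{-1/2} exp(-2π i m n / N)`. -/
def dftMatrix (N : ℕ) : Matrix (Fin N) (Fin N) ℂ :=
  Matrix.of fun m n => ((Real.sqrt N : ℝ) : ℂ)⁻¹ *
    Complex.exp (-(2 * (Real.pi : ℂ) * Complex.I * ((m : ℕ) : ℂ) * ((n : ℕ) : ℂ)) / (N : ℂ))

/-- The normalized DFT (Fourier coefficients) of a real vector: `ĥ = F_N h`. -/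
def dftCoeff {N : ℕ} (h : Fin N → ℝ) : Fin N → ℂ :=
  (dftMatrix N).mulVec fun n => ((h n : ℝ) : ℂ)

/-!
Assouad's method. Let `R = F_N^* D F_N`, where `D` inverts the eigenvalues `√N ĥ_m` of `H` on
the `K` leading frequencies and vanishes on the others. Then `RH` is the orthogonal projection
onto these frequencies, so `(RH)_{nn} = K/N`, while `‖R‖ ≤ (√N |ĥ_{K-1}|)⁻¹` because the
spectrum is sorted. Feed the algorithm the vertices `v` of the cube `{0,1}^N`: flipping the
coordinate `n` gives a neighbouring input and moves `(RHv)_n` by `K/N`, so by differential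
privacy `(R 𝒜(v))_n` cannot be `K/(2N)`-close to `(RHv)_n` with high probability at both
ends of the edge. Summing these two-point bounds over all edges, some vertex has
`E‖R(𝒜(v) - Hv)‖² ≳ K²/N`, hence `E‖𝒜(v) - Hv‖² ≳ K² |ĥ_{K-1}|²`.
-/

open Complex Matrix

lemma sum_range_pow_eq_zero {R : Type*} [Ring R] [NoZeroDivisors R] {ξ : R} {N : ℕ}
    (h : ξ ^ N = 1) (h1 : ξ ≠ 1) : ∑ m ∈ range N, ξ ^ m = 0 := by
  simpa [h, sub_ne_zero.2 h1] using geom_sum_mul ξ N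

lemma mulVec_sub_mulVec_apply_self {ι R : Type*} [Fintype ι] [DecidableEq ι] [CommRing R]
    (M : Matrix ι ι R) {x x' : ι → R} {i : ι} (hx : ∀ j ≠ i, x j = x' j) :
    (M *ᵥ x) i - (M *ᵥ x') i = M i i * (x i - x' i) := by
  have hsingle : x - x' = Pi.single i (x i - x' i) := by
    ext j
    rcases eq_or_ne j i with rfl | hj
    · simp
    · simp [hx j hj, hj]
  rw [← Pi.sub_apply, ← mulVec_sub, hsingle, mulVec_single]
  simp

lemma sum_edist_sq_eq_ofReal {ι E : Type*} [Fintype ι] [SeminormedAddCommGroup E]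
    (z z' : ι → E) :
    ∑ i, edist (z i) (z' i) ^ 2 = ENNReal.ofReal (∑ i, ‖z i - z' i‖ ^ 2) := by
  rw [ENNReal.ofReal_sum_of_nonneg fun _ _ => by positivity]
  simp_rw [ENNReal.ofReal_pow (norm_nonneg _), ofReal_norm, edist_eq_enorm_sub]

def dftRoot (N : ℕ) : ℂ := exp (-(2 * Real.pi * I / N))

lemma isPrimitiveRoot_dftRoot {N : ℕ} (hN : N ≠ 0) : IsPrimitiveRoot (dftRoot N) N := by
  simpa [dftRoot, Complex.exp_neg] using (Complex.isPrimitiveRoot_exp N hN).inv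

lemma conj_dftRoot (N : ℕ) : (starRingEnd ℂ) (dftRoot N) = (dftRoot N)⁻¹ := by
  rw [dftRoot, ← Complex.exp_conj, Complex.exp_neg]
  simp [map_div₀, map_ofNat, neg_div]

lemma dftMatrix_apply (N : ℕ) (m n : Fin N) :
    dftMatrix N m n = ((√N : ℝ) : ℂ)⁻¹ * dftRoot N ^ ((m : ℕ) * n) := by
  rw [dftMatrix, of_apply, dftRoot, ← Complex.exp_nat_mul]
  congr 2
  push_cast
  ring

lemma ofReal_sqrt_inv_mul_self (N : ℕ) :
    ((√N : ℝ) : ℂ)⁻¹ * ((√N : ℝ) : ℂ)⁻¹ = (N : ℂ)⁻¹ := by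
  rw [← mul_inv, ← ofReal_mul, Real.mul_self_sqrt (Nat.cast_nonneg N), ofReal_natCast]

lemma star_dftMatrix_mul_self (N : ℕ) : star (dftMatrix N) * dftMatrix N = 1 := by
  rcases eq_or_ne N 0 with rfl | hN
  · exact Subsingleton.elim _ _
  have hζ := isPrimitiveRoot_dftRoot hN
  ext a b
  set ξ := dftRoot N ^ (b : ℕ) * (dftRoot N ^ (a : ℕ))⁻¹
  have hξ : ξ ^ N = 1 := by
    rw [mul_pow, inv_pow, ← pow_mul, ← pow_mul, mul_comm (b : ℕ), mul_comm (a : ℕ), pow_mul,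
      pow_mul, hζ.pow_eq_one, one_pow, one_pow, inv_one, mul_one]
  have hterm (m : Fin N) : star (dftMatrix N) a m * dftMatrix N m b = (N : ℂ)⁻¹ * ξ ^ (m : ℕ) := by
    rw [star_apply, dftMatrix_apply, dftMatrix_apply, star_mul', star_pow, Complex.star_def,
      conj_dftRoot, map_inv₀, conj_ofReal, ← ofReal_sqrt_inv_mul_self]
    ring
  simp_rw [mul_apply, hterm, ← Finset.mul_sum, Fin.sum_univ_eq_sum_range (fun m => ξ ^ m),
    one_apply]
  split_ifs with hab
  · subst hab
    simp [ξ, hζ.ne_zero hN, hN]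
  · have hξ1 : ξ ≠ 1 := fun h => hab <| Fin.ext <|
      (hζ.pow_inj a.isLt b.isLt ((mul_inv_eq_one₀ (by simp [hζ.ne_zero hN])).1 h).symm)
    rw [sum_range_pow_eq_zero hξ hξ1, mul_zero]

lemma dftMatrix_mem_unitaryGroup (N : ℕ) : dftMatrix N ∈ unitaryGroup (Fin N) ℂ :=
  mem_unitaryGroup_iff'.2 (star_dftMatrix_mul_self N)

lemma dftMatrix_apply_add (N : ℕ) (m t n : Fin N) :
    dftMatrix N m (t + n) = ((√N : ℝ) : ℂ) * dftMatrix N m t * dftMatrix N m n := by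
  have hN : N ≠ 0 := m.pos.ne'
  have hω : (dftRoot N ^ (m : ℕ)) ^ N = 1 := by
    rw [← pow_mul, mul_comm, pow_mul, (isPrimitiveRoot_dftRoot hN).pow_eq_one, one_pow]
  have hs : ((√N : ℝ) : ℂ) ≠ 0 := by simp [hN]
  simp only [dftMatrix_apply, Fin.val_add, pow_mul]
  rw [← pow_eq_pow_mod _ hω, pow_add]
  field_simp

lemma dftMatrix_mul_circulant {N : ℕ} [NeZero N] (h : Fin N → ℂ) :
    dftMatrix N * circulant h =
      diagonal (fun m => ((√N : ℝ) : ℂ) * (dftMatrix N *ᵥ h) m) * dftMatrix N := by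
  ext m n
  rw [mul_apply, diagonal_mul, mulVec, dotProduct, Finset.mul_sum, Finset.sum_mul]
  refine Fintype.sum_equiv (Equiv.subRight n) _ _ fun j => ?_
  have hshift := dftMatrix_apply_add N m (j - n) n
  rw [sub_add_cancel] at hshift
  rw [Equiv.subRight_apply, circulant_apply, hshift]
  ring

lemma ofReal_circulant_mulVec {N : ℕ} (h x : Fin N → ℝ) (i : Fin N) :
    (((circulant h *ᵥ x) i : ℝ) : ℂ) =
      (circulant (fun j => (h j : ℂ)) *ᵥ fun j => (x j : ℂ)) i := by
  simpa [map_circulant, Function.comp_def] using Complex.ofRealHom.map_mulVec (circulant h) x i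

section UnitaryGroup

variable {ι 𝕜 : Type*} [Fintype ι] [RCLike 𝕜]

lemma star_dotProduct_self_eq_sum_norm_sq (v : ι → 𝕜) :
    star v ⬝ᵥ v = ((∑ i, ‖v i‖ ^ 2 : ℝ) : 𝕜) := by
  simp [dotProduct, RCLike.conj_mul]

variable [DecidableEq ι]

lemma sum_norm_sq_mulVec_of_mem_unitaryGroup {U : Matrix ι ι 𝕜} (hU : U ∈ unitaryGroup ι 𝕜)
    (w : ι → 𝕜) : ∑ i, ‖(U *ᵥ w) i‖ ^ 2 = ∑ i, ‖w i‖ ^ 2 := by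
  have h : star (U *ᵥ w) ⬝ᵥ (U *ᵥ w) = star w ⬝ᵥ w := by
    rw [star_mulVec, dotProduct_mulVec, vecMul_vecMul, ← star_eq_conjTranspose,
      mem_unitaryGroup_iff'.1 hU, vecMul_one]
  simpa only [star_dotProduct_self_eq_sum_norm_sq, RCLike.ofReal_inj] using h

lemma sum_norm_sq_conj_diagonal_mulVec_le {U : Matrix ι ι 𝕜} (hU : U ∈ unitaryGroup ι 𝕜)
    {d : ι → 𝕜} {c : ℝ} (hd : ∀ i, ‖d i‖ ≤ c) (w : ι → 𝕜) :
    ∑ i, ‖((star U * diagonal d * U) *ᵥ w) i‖ ^ 2 ≤ c ^ 2 * ∑ i, ‖w i‖ ^ 2 := by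
  rw [← mulVec_mulVec, ← mulVec_mulVec,
    sum_norm_sq_mulVec_of_mem_unitaryGroup (Unitary.star_mem hU),
    ← sum_norm_sq_mulVec_of_mem_unitaryGroup hU w, Finset.mul_sum]
  gcongr with i
  rw [mulVec_diagonal, norm_mul, mul_pow]
  gcongr
  exact hd i

end UnitaryGroup

section TruncatedInverse

variable {N : ℕ}

lemma norm_sq_dftMatrix_apply (m n : Fin N) : ‖dftMatrix N m n‖ ^ 2 = (N : ℝ)⁻¹ := by
  have hN : N ≠ 0 := m.pos.ne'
  rw [dftMatrix_apply, norm_mul, norm_pow, (isPrimitiveRoot_dftRoot hN).norm'_eq_one hN, one_pow,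
    mul_one, norm_inv, Complex.norm_real, Real.norm_of_nonneg (Real.sqrt_nonneg _), inv_pow,
    Real.sq_sqrt (Nat.cast_nonneg N)]

lemma star_dftMatrix_mul_diagonal_mul_apply_self (e : Fin N → ℂ) (n : Fin N) :
    (star (dftMatrix N) * diagonal e * dftMatrix N).diag n = (∑ m, e m) / N := by
  rw [diag_apply, mul_apply, Finset.sum_div]
  simp_rw [mul_diagonal, star_apply]
  refine Finset.sum_congr rfl fun m _ => ?_
  rw [mul_right_comm, Complex.star_def, Complex.conj_mul', ← Complex.ofReal_pow,
    norm_sq_dftMatrix_apply]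
  push_cast
  ring

def truncatedInverse (K : ℕ) (h : Fin N → ℝ) : Matrix (Fin N) (Fin N) ℂ :=
  star (dftMatrix N) *
    diagonal (fun m : Fin N => if (m : ℕ) < K then (((√N : ℝ) : ℂ) * dftCoeff h m)⁻¹ else 0) *
    dftMatrix N

lemma truncatedInverse_mul_circulant_apply_self {K : ℕ} (hK : K ≤ N) {h : Fin N → ℝ}
    (hh : ∀ m : Fin N, (m : ℕ) < K → dftCoeff h m ≠ 0) (n : Fin N) :
    (truncatedInverse K h * circulant fun j => (h j : ℂ)).diag n = K / N := by
  have : NeZero N := NeZero.of_pos n.pos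
  have hsN : ((√N : ℝ) : ℂ) ≠ 0 := by simp [NeZero.ne N]
  have hone (m : Fin N) :
      (if (m : ℕ) < K then (((√N : ℝ) : ℂ) * dftCoeff h m)⁻¹ else 0) *
        (((√N : ℝ) : ℂ) * dftCoeff h m) = if (m : ℕ) < K then 1 else 0 := by
    split_ifs with hm
    · exact inv_mul_cancel₀ (mul_ne_zero hsN (hh m hm))
    · exact zero_mul _
  rw [truncatedInverse, Matrix.mul_assoc, dftMatrix_mul_circulant, ← dftCoeff, ← Matrix.mul_assoc,
    Matrix.mul_assoc (star (dftMatrix N)), diagonal_mul_diagonal,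
    star_dftMatrix_mul_diagonal_mul_apply_self]
  simp only [hone]
  simp [Finset.sum_boole, Fin.card_filter_val_lt, hK]

lemma sum_norm_sq_truncatedInverse_mulVec_le {K : ℕ} {h : Fin N → ℝ} {b : ℝ} (hb : 0 < b)
    (hsort : ∀ m : Fin N, (m : ℕ) < K → b ≤ ‖dftCoeff h m‖) (w : Fin N → ℂ) :
    ∑ i, ‖(truncatedInverse K h *ᵥ w) i‖ ^ 2 ≤ (N * b ^ 2)⁻¹ * ∑ i, ‖w i‖ ^ 2 := by
  have hc : (N * b ^ 2)⁻¹ = ((√N : ℝ) * b)⁻¹ ^ 2 := by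
    rw [inv_pow, mul_pow, Real.sq_sqrt (Nat.cast_nonneg N)]
  rw [hc]
  refine sum_norm_sq_conj_diagonal_mulVec_le (dftMatrix_mem_unitaryGroup N) (fun m => ?_) w
  have hN : (0 : ℝ) < √N := Real.sqrt_pos.2 (Nat.cast_pos.2 m.pos)
  split_ifs with hm
  · rw [norm_inv, norm_mul, Complex.norm_real, Real.norm_of_nonneg hN.le]
    gcongr
    exact hsort m hm
  · rw [norm_zero]
    positivity

lemma sum_edist_sq_truncatedInverse_mulVec_le {K : ℕ} {h : Fin N → ℝ} {b : ℝ} (hb : 0 < b)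
    (hsort : ∀ m : Fin N, (m : ℕ) < K → b ≤ ‖dftCoeff h m‖) (y z : Fin N → ℂ) :
    ∑ i, edist ((truncatedInverse K h *ᵥ y) i) ((truncatedInverse K h *ᵥ z) i) ^ 2 ≤
      ENNReal.ofReal (N * b ^ 2)⁻¹ * ∑ i, edist (y i) (z i) ^ 2 := by
  rw [sum_edist_sq_eq_ofReal, sum_edist_sq_eq_ofReal, ← ENNReal.ofReal_mul (by positivity)]
  refine ENNReal.ofReal_le_ofReal ?_
  simpa only [mulVec_sub, Pi.sub_apply] using
    sum_norm_sq_truncatedInverse_mulVec_le hb hsort (y - z)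

lemma edist_truncatedInverse_mul_circulant_mulVec {K : ℕ} (hK : K ≤ N) {h : Fin N → ℝ}
    (hh : ∀ m : Fin N, (m : ℕ) < K → dftCoeff h m ≠ 0) {x x' : Fin N → ℝ} {i : Fin N}
    (hx : ∀ j ≠ i, x j = x' j) :
    edist (((truncatedInverse K h * circulant fun j => (h j : ℂ)) *ᵥ fun j => (x j : ℂ)) i)
        (((truncatedInverse K h * circulant fun j => (h j : ℂ)) *ᵥ fun j => (x' j : ℂ)) i) =
      ENNReal.ofReal (K / N * |x i - x' i|) := by
  rw [edist_eq_enorm_sub, mulVec_sub_mulVec_apply_self _ fun j hj => by simp [hx j hj],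
    ← diag_apply (truncatedInverse K h * _) i, truncatedInverse_mul_circulant_apply_self hK hh, ← ofReal_norm, norm_mul,
    ← Complex.ofReal_sub, Complex.norm_real, Real.norm_eq_abs, norm_div, Complex.norm_natCast,
    Complex.norm_natCast]

end TruncatedInverse

section Assouad

variable {Ω E : Type*} [MeasurableSpace Ω] [PseudoEMetricSpace E] [MeasurableSpace E]
  [OpensMeasurableSpace E]

lemma le_lintegral_edist_sq_add {μ ν : Measure Ω} [IsProbabilityMeasure μ] {a d r : ℝ≥0∞}
    (hμν : ∀ T, MeasurableSet T → μ T ≤ a * ν T + d) {g : Ω → E} (hg : Measurable g)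
    {p p' : E} (hpp' : 2 * r ≤ edist p p') :
    (1 - d) * r ^ 2 ≤ ∫⁻ ω, edist (g ω) p ^ 2 ∂μ + a * ∫⁻ ω, edist (g ω) p' ^ 2 ∂ν := by
  set T := {ω | edist (g ω) p < r}
  have hT : MeasurableSet T := measurableSet_lt (measurable_edist_left.comp hg) measurable_const
  have hfar : r ^ 2 * μ Tᶜ ≤ ∫⁻ ω, edist (g ω) p ^ 2 ∂μ := by
    refine le_trans ?_ (mul_meas_ge_le_lintegral₀
      ((measurable_edist_left.comp hg).pow_const 2).aemeasurable (r ^ 2))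
    gcongr
    intro ω (hω : ¬ edist (g ω) p < r)
    exact pow_le_pow_left' (not_lt.1 hω) 2
  have hnear : r ^ 2 * ν T ≤ ∫⁻ ω, edist (g ω) p' ^ 2 ∂ν := by
    refine le_trans ?_ (mul_meas_ge_le_lintegral₀
      ((measurable_edist_left.comp hg).pow_const 2).aemeasurable (r ^ 2))
    gcongr
    intro ω (hω : edist (g ω) p < r)
    refine pow_le_pow_left' (b := edist (g ω) p') (not_lt.1 fun h' => ?_) 2
    have := hpp'.trans (edist_triangle_left p p' (g ω))
    exact (ENNReal.add_lt_add hω h').not_ge (two_mul r ▸ this)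
  have hmass : 1 - d ≤ a * ν T + μ Tᶜ := by
    rw [tsub_le_iff_right, ← prob_add_prob_compl (μ := μ) hT]
    calc μ T + μ Tᶜ ≤ a * ν T + d + μ Tᶜ := by gcongr; exact hμν T hT
      _ = a * ν T + μ Tᶜ + d := by ring
  calc (1 - d) * r ^ 2 ≤ (a * ν T + μ Tᶜ) * r ^ 2 := by gcongr
    _ = r ^ 2 * μ Tᶜ + a * (r ^ 2 * ν T) := by ring
    _ ≤ _ := by gcongr

lemma card_mul_le_sum_lintegral_edist_sq {ι : Type*} [Fintype ι] [DecidableEq ι]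
    {P : (ι → Bool) → Measure Ω} (hP : ∀ v, IsProbabilityMeasure (P v)) {a d r : ℝ≥0∞}
    (hflip : ∀ v i T, MeasurableSet T → P v T ≤ a * P (Function.update v i (!v i)) T + d)
    {g : ι → Ω → E} (hg : ∀ i, Measurable (g i)) {θ : ι → (ι → Bool) → E}
    (hθ : ∀ v i, 2 * r ≤ edist (θ i v) (θ i (Function.update v i (!v i)))) :
    (Fintype.card ι * 2 ^ Fintype.card ι : ℝ≥0∞) * ((1 - d) * r ^ 2) ≤
      (1 + a) * ∑ v, ∑ i, ∫⁻ ω, edist (g i ω) (θ i v) ^ 2 ∂(P v) := by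
  set L : ι → (ι → Bool) → ℝ≥0∞ := fun i v => ∫⁻ ω, edist (g i ω) (θ i v) ^ 2 ∂(P v)
  have hcoord (i : ι) : (2 ^ Fintype.card ι : ℝ≥0∞) * ((1 - d) * r ^ 2) ≤ (1 + a) * ∑ v, L i v := by
    have hinv : Function.Involutive fun v : ι → Bool => Function.update v i (!v i) := fun v => by
      simp
    have hswap : ∑ v, L i (Function.update v i (!v i)) = ∑ v, L i v :=
      Equiv.sum_comp (hinv.toPerm _) (L i)
    calc (2 ^ Fintype.card ι : ℝ≥0∞) * ((1 - d) * r ^ 2) = ∑ _v : ι → Bool, (1 - d) * r ^ 2 := by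
          simp
      _ ≤ ∑ v, (L i v + a * L i (Function.update v i (!v i))) := by
          gcongr with v
          exact le_lintegral_edist_sq_add (hμν := hflip v i) (hg i) (hθ v i)
      _ = (1 + a) * ∑ v, L i v := by
          rw [Finset.sum_add_distrib, ← Finset.mul_sum, hswap]
          ring
  rw [Finset.sum_comm, Finset.mul_sum, mul_assoc, ← Finset.card_univ (α := ι), ← nsmul_eq_mul,
    ← Finset.sum_const]
  exact Finset.sum_le_sum fun i _ => hcoord i

end Assouad

section Hypercube

variable {ι : Type*}

def cubePoint (v : ι → Bool) : ι → ℝ := fun i => if v i then 1 else 0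

lemma cubePoint_mem_Icc (v : ι → Bool) (i : ι) : cubePoint v i ∈ Set.Icc (0 : ℝ) 1 := by
  unfold cubePoint
  split_ifs <;> simp

variable [DecidableEq ι]

lemma cubePoint_update_apply_of_ne (v : ι → Bool) {i j : ι} (hj : j ≠ i) :
    cubePoint (Function.update v i (!v i)) j = cubePoint v j := by
  simp [cubePoint, hj]

lemma abs_sub_cubePoint_update_apply_self (v : ι → Bool) (i : ι) :
    |cubePoint v i - cubePoint (Function.update v i (!v i)) i| = 1 := by
  cases h : v i <;> simp [cubePoint, h]

lemma sum_abs_sub_cubePoint_update [Fintype ι] (v : ι → Bool) (i : ι) :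
    ∑ j, |cubePoint v j - cubePoint (Function.update v i (!v i)) j| = 1 := by
  rw [Finset.sum_eq_single i (fun j _ hj => by rw [cubePoint_update_apply_of_ne v hj, sub_self,
    abs_zero]) (by simp), abs_sub_cubePoint_update_apply_self]

lemma DiffPrivate.le_cubePoint_update {N : ℕ} {Ω : Type*} [MeasurableSpace Ω]
    {A : (Fin N → ℝ) → Measure Ω} {ε δ : ℝ} (hA : DiffPrivate A ε δ) (v : Fin N → Bool)
    (i : Fin N) (T : Set Ω) (hT : MeasurableSet T) :
    A (cubePoint v) T ≤
      ENNReal.ofReal (Real.exp ε) * A (cubePoint (Function.update v i (!v i))) T +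
        ENNReal.ofReal δ :=
  hA _ _ (cubePoint_mem_Icc v) (cubePoint_mem_Icc _) (sum_abs_sub_cubePoint_update v i).le T hT

end Hypercube

def meanSquaredError {N : ℕ} (A : (Fin N → ℝ) → Measure (Fin N → ℂ))
    (H : Matrix (Fin N) (Fin N) ℝ) (x : Fin N → ℝ) : ℝ≥0∞ :=
  (N : ℝ≥0∞)⁻¹ * ∫⁻ y, ∑ i, (‖y i - (((H *ᵥ x) i : ℝ) : ℂ)‖₊ : ℝ≥0∞) ^ 2 ∂(A x)

lemma sum_lintegral_edist_sq_truncatedInverse_le {N K : ℕ} {h : Fin N → ℝ} {b : ℝ} (hb : 0 < b)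
    (hsort : ∀ m : Fin N, (m : ℕ) < K → b ≤ ‖dftCoeff h m‖)
    (A : (Fin N → ℝ) → Measure (Fin N → ℂ)) (x : Fin N → ℝ) :
    ∑ i, ∫⁻ y, edist ((truncatedInverse K h *ᵥ y) i)
        (((truncatedInverse K h * circulant fun j => (h j : ℂ)) *ᵥ fun j => (x j : ℂ)) i) ^ 2
          ∂(A x) ≤
      ENNReal.ofReal (N * b ^ 2)⁻¹ * (N * meanSquaredError A (circulant h) x) := by
  rcases eq_or_ne N 0 with rfl | hN
  · simp
  rw [← lintegral_finsetSum _ fun i _ => by fun_prop, meanSquaredError, ← mul_assoc (N : ℝ≥0∞),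
    ENNReal.mul_inv_cancel (by simp [hN]) (by simp), one_mul, ← lintegral_const_mul _ (by fun_prop)]
  refine lintegral_mono fun y => ?_
  rw [← mulVec_mulVec]
  refine (sum_edist_sq_truncatedInverse_mulVec_le hb hsort y _).trans_eq ?_
  simp_rw [ofReal_circulant_mulVec, edist_eq_enorm_sub, enorm_eq_nnnorm]

lemma le_mul_iSup_meanSquaredError {N K : ℕ} (hK : K ≤ N) {h : Fin N → ℝ} {b : ℝ} (hb : 0 < b)
    (hsort : ∀ m : Fin N, (m : ℕ) < K → b ≤ ‖dftCoeff h m‖) {ε δ : ℝ}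
    {A : (Fin N → ℝ) → Measure (Fin N → ℂ)} (hA : ∀ x, IsProbabilityMeasure (A x))
    (hdp : DiffPrivate A ε δ) :
    (1 - ENNReal.ofReal δ) * ENNReal.ofReal (K / (2 * N)) ^ 2 ≤
      (1 + ENNReal.ofReal (Real.exp ε)) *
        (ENNReal.ofReal (N * b ^ 2)⁻¹ * ⨆ x, meanSquaredError A (circulant h) x) := by
  rcases eq_or_ne N 0 with rfl | hN
  · simp
  set s := ⨆ x, meanSquaredError A (circulant h) x
  have hne (m : Fin N) (hm : (m : ℕ) < K) : dftCoeff h m ≠ 0 :=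
    norm_pos_iff.1 (hb.trans_le (hsort m hm))
  have hassouad := card_mul_le_sum_lintegral_edist_sq (fun v => hA (cubePoint v))
    hdp.le_cubePoint_update (g := fun i y => (truncatedInverse K h *ᵥ y) i) (fun i => by fun_prop)
    (r := ENNReal.ofReal (K / (2 * N))) fun v i => by
      rw [edist_truncatedInverse_mul_circulant_mulVec hK hne fun j hj =>
          (cubePoint_update_apply_of_ne v hj).symm, abs_sub_cubePoint_update_apply_self,
        ← ENNReal.ofReal_ofNat 2, ← ENNReal.ofReal_mul (by norm_num)]
      exact ENNReal.ofReal_le_ofReal (le_of_eq (by field_simp))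
  have hrisk (v : Fin N → Bool) := (sum_lintegral_edist_sq_truncatedInverse_le hb hsort A
    (cubePoint v)).trans (mul_le_mul_right (mul_le_mul_right (le_iSup _ (cubePoint v)) _) _)
  refine (ENNReal.mul_le_mul_iff_right (a := N * 2 ^ N) (by simp [hN]) (by finiteness)).1 ?_
  calc (N * 2 ^ N : ℝ≥0∞) * ((1 - ENNReal.ofReal δ) * ENNReal.ofReal (K / (2 * N)) ^ 2)
      ≤ (1 + ENNReal.ofReal (Real.exp ε)) *
          (2 ^ N * (ENNReal.ofReal (N * b ^ 2)⁻¹ * (N * s))) := by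
        simpa using hassouad.trans (mul_le_mul_right (Finset.sum_le_sum fun v _ => hrisk v) _)
    _ = _ := by ring

lemma ofReal_le_iSup_meanSquaredError {N K : ℕ} (hK : K ≤ N) {h : Fin N → ℝ} {b : ℝ}
    (hb : 0 < b) (hsort : ∀ m : Fin N, (m : ℕ) < K → b ≤ ‖dftCoeff h m‖) {ε δ : ℝ}
    (hε : ε ≤ 1 / 2) (hδ : δ ≤ 1 / 2) {A : (Fin N → ℝ) → Measure (Fin N → ℂ)}
    (hA : ∀ x, IsProbabilityMeasure (A x)) (hdp : DiffPrivate A ε δ) :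
    ENNReal.ofReal (K ^ 2 * b ^ 2 / (32 * N)) ≤ ⨆ x, meanSquaredError A (circulant h) x := by
  rcases eq_or_ne N 0 with rfl | hN
  · simp
  set s := ⨆ x, meanSquaredError A (circulant h) x
  have hδ' : ENNReal.ofReal (1 / 2) ≤ 1 - ENNReal.ofReal δ := by
    refine ENNReal.le_sub_of_add_le_right ENNReal.ofReal_ne_top ?_
    calc ENNReal.ofReal (1 / 2) + ENNReal.ofReal δ
        ≤ ENNReal.ofReal (1 / 2) + ENNReal.ofReal (1 / 2) := by gcongr
      _ = 1 := by rw [← ENNReal.ofReal_add (by norm_num) (by norm_num)]; norm_num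
  have hε' : 1 + ENNReal.ofReal (Real.exp ε) ≤ 4 := by
    have hexp : Real.exp ε ≤ 3 := by
      linarith [Real.exp_le_exp.2 (hε.trans (by norm_num : (1 / 2 : ℝ) ≤ 1)), Real.exp_one_lt_d9]
    calc 1 + ENNReal.ofReal (Real.exp ε) ≤ 1 + ENNReal.ofReal 3 := by gcongr
      _ = 4 := by rw [ENNReal.ofReal_ofNat]; norm_num
  have hNb : (0 : ℝ) < N * b ^ 2 := by positivity
  calc ENNReal.ofReal (K ^ 2 * b ^ 2 / (32 * N))
      = ENNReal.ofReal (N * b ^ 2 / 4) *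
          (ENNReal.ofReal (1 / 2) * ENNReal.ofReal (K / (2 * N)) ^ 2) := by
        rw [← ENNReal.ofReal_pow (by positivity), ← ENNReal.ofReal_mul (by norm_num),
          ← ENNReal.ofReal_mul (by positivity)]
        congr 1
        field_simp
        ring
    _ ≤ ENNReal.ofReal (N * b ^ 2 / 4) *
          ((1 + ENNReal.ofReal (Real.exp ε)) * (ENNReal.ofReal (N * b ^ 2)⁻¹ * s)) := by
        exact mul_le_mul_right
          ((mul_le_mul_left hδ' _).trans (le_mul_iSup_meanSquaredError hK hb hsort hA hdp)) _
    _ ≤ ENNReal.ofReal (N * b ^ 2 / 4) * (4 * (ENNReal.ofReal (N * b ^ 2)⁻¹ * s)) := by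
        gcongr
    _ = s := by
        rw [← mul_assoc, ← mul_assoc, ← ENNReal.ofReal_ofNat 4,
          ← ENNReal.ofReal_mul (by positivity),
          ← ENNReal.ofReal_mul (by positivity)]
        field_simp
        simp

/-- spectral lower bound on the mean squared error of any
`(ε,δ)`-differentially private algorithm approximating the circular convolution `x ↦ Hx`. -/
theorem private_convolution_lower_bound :
    ∃ C ε₀ δ₀ : ℝ, 0 < C ∧ 0 < ε₀ ∧ 0 < δ₀ ∧
      ∀ (N : ℕ), 2 ≤ N → ∀ h : Fin N → ℝ,
        (∀ i j : Fin N, i ≤ j → ‖dftCoeff h j‖ ≤ ‖dftCoeff h i‖) →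
        ∀ ε δ : ℝ, 0 < ε → ε ≤ ε₀ → 0 < δ → δ ≤ δ₀ →
        ∀ A : (Fin N → ℝ) → Measure (Fin N → ℂ),
          (∀ x, IsProbabilityMeasure (A x)) →
          DiffPrivate A ε δ →
          ∀ K : ℕ, ∀ _hK1 : 1 ≤ K, ∀ _hK2 : K ≤ N,
            ENNReal.ofReal (C * (K : ℝ) ^ 2 * ‖dftCoeff h ⟨K - 1, by omega⟩‖ ^ 2 /
                ((N : ℝ) * (Real.logb 2 N) ^ 2)) ≤
              ⨆ x : Fin N → ℝ, ((N : ℝ≥0∞))⁻¹ *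
                ∫⁻ y, ∑ i, (‖y i - (((Matrix.circulant h).mulVec x i : ℝ) : ℂ)‖₊ : ℝ≥0∞) ^ 2
                  ∂(A x) := by
  refine ⟨1 / 32, 1 / 2, 1 / 2, by norm_num, by norm_num, by norm_num, ?_⟩
  intro N hN h hsorted ε δ _ hε _ hδ A hA hdp K hK1 hK2
  set b := ‖dftCoeff h ⟨K - 1, by omega⟩‖
  rcases (show 0 ≤ b from norm_nonneg _).eq_or_lt with hb | hb
  · simp [← hb]
  have hsort (m : Fin N) (hm : (m : ℕ) < K) : b ≤ ‖dftCoeff h m‖ :=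
    hsorted _ _ (Fin.le_def.2 (by simp only; omega))
  have hlog : 1 ≤ Real.logb 2 N := by
    rw [Real.le_logb_iff_rpow_le (by norm_num) (by positivity), Real.rpow_one]
    exact_mod_cast hN
  refine le_trans (ENNReal.ofReal_le_ofReal ?_)
    (ofReal_le_iSup_meanSquaredError hK2 hb hsort hε hδ hA hdp)
  calc 1 / 32 * (K : ℝ) ^ 2 * b ^ 2 / (N * Real.logb 2 N ^ 2)
      = K ^ 2 * b ^ 2 / (32 * N) / Real.logb 2 N ^ 2 := by ring
    _ ≤ K ^ 2 * b ^ 2 / (32 * N) := div_le_self (by positivity) (one_le_pow₀ hlog)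
end
end

section
/- Let A be an M × N complex matrix with singular values λ₁ ≥ λ₂ ≥ … ≥ λ_{min{M,N}}, let 1 ≤ K ≤ min{M,N}, and let P be the orthogonal projection matrix onto the span of the left singular vectors of A corresponding to λ₁, …, λ_K. Then there exists a set S of K columns such that the K × K matrix B formed by those columns of PA (restricted to the K-dimensional range of P in a suitable orthonormal basis) satisfies |det(B)|^{1/K} ≥ (N choose K)^{−1/(2K)} · (∏_{i=1}^K λ_i)^{1/K} ≥ e^{−1/2} · √(K/N) · (∏_{i=1}^K λ_i)^{1/K}. -/
open Finset
open scoped ENNReal NNReal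

noncomputable section

namespace ProjDet

open Matrix

theorem step1 {K N : ℕ} (C : Matrix (Fin K) (Fin N) ℂ) :
    (C * C.conjTranspose).det
      = ∑ f : Fin K → Fin N, (∏ i, C i (f i)) * (C.conjTranspose.submatrix f id).det := by
  have h1 : (C * C.conjTranspose) = Matrix.of
      (fun i => ∑ j : Fin N, C i j • (fun k => star (C k j))) := by
    ext i k
    simp [Matrix.mul_apply, Matrix.conjTranspose_apply, Finset.sum_apply]
  rw [h1]
  have h2 := (Matrix.detRowAlternating :
      (Fin K → ℂ) [⋀^Fin K]→ₗ[ℂ] ℂ).toMultilinearMap.map_sum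
      (g := fun (i : Fin K) (j : Fin N) => C i j • (fun k => star (C k j)))
  have h3 : ∀ f : Fin K → Fin N,
      (Matrix.detRowAlternating : (Fin K → ℂ) [⋀^Fin K]→ₗ[ℂ] ℂ).toMultilinearMap
        (fun i => C i (f i) • (fun k => star (C k (f i))))
      = (∏ i, C i (f i)) * (C.conjTranspose.submatrix f id).det := by
    intro f
    rw [MultilinearMap.map_smul_univ]
    rfl
  calc Matrix.det (Matrix.of fun i => ∑ j : Fin N, C i j • (fun k => star (C k j)))
      = (Matrix.detRowAlternating : (Fin K → ℂ) [⋀^Fin K]→ₗ[ℂ] ℂ).toMultilinearMap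
          (fun i => ∑ j : Fin N, C i j • (fun k => star (C k j))) := rfl
    _ = ∑ f : Fin K → Fin N,
          (Matrix.detRowAlternating : (Fin K → ℂ) [⋀^Fin K]→ₗ[ℂ] ℂ).toMultilinearMap
            (fun i => C i (f i) • (fun k => star (C k (f i)))) := h2
    _ = _ := by exact Finset.sum_congr rfl fun f _ => h3 f

theorem step2 {K N : ℕ} (C : Matrix (Fin K) (Fin N) ℂ) :
    ∑ f : Fin K → Fin N, (∏ i, C i (f i)) * (C.conjTranspose.submatrix f id).det
      = ∑ f ∈ Finset.univ.filter (fun f : Fin K → Fin N => Function.Injective f),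
          (∏ i, C i (f i)) * (C.conjTranspose.submatrix f id).det := by
  rw [Finset.sum_filter_of_ne]
  intro f _ hne
  by_contra hni
  apply hne
  simp only [Function.Injective, not_forall] at hni
  obtain ⟨i, j, hij, hne'⟩ := hni
  have : (C.conjTranspose.submatrix f id).det = 0 := by
    apply Matrix.det_zero_of_row_eq hne'
    ext k
    simp [Matrix.submatrix_apply, hij]
  rw [this, mul_zero]

theorem step3 {K N : ℕ} (hKN : K ≤ N) (T : (Fin K → Fin N) → ℂ) :
    ∑ f ∈ Finset.univ.filter (fun f : Fin K → Fin N => Function.Injective f), T f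
      = ∑ s ∈ (Finset.powersetCard K (Finset.univ : Finset (Fin N))).attach,
          ∑ π : Equiv.Perm (Fin K),
            T (⇑(Finset.orderEmbOfFin s.1 (Finset.mem_powersetCard_univ.mp s.2)) ∘ ⇑π) := by
  classical
  set A := Finset.powersetCard K (Finset.univ : Finset (Fin N)) with hA
  have hAne : A.Nonempty := by
    obtain ⟨s, hs⟩ := Finset.exists_subset_card_eq (by simpa using hKN :
      K ≤ (Finset.univ : Finset (Fin N)).card)
    exact ⟨s, Finset.mem_powersetCard.mpr ⟨hs.1, hs.2⟩⟩
  have hAne' : Nonempty {x // x ∈ A} := ⟨⟨hAne.choose, hAne.choose_spec⟩⟩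
  set g : (Fin K → Fin N) → {x // x ∈ A} := fun f =>
    if h : Function.Injective f then
      ⟨Finset.image f Finset.univ, by
        rw [hA, Finset.mem_powersetCard_univ, Finset.card_image_of_injective _ h,
          Finset.card_univ, Fintype.card_fin]⟩
    else hAne'.some with hg
  rw [← Finset.sum_fiberwise_of_maps_to (g := g) (fun f _ => Finset.mem_attach _ _) T]
  refine Finset.sum_congr rfl fun y _ => ?_
  have hcy : y.1.card = K := Finset.mem_powersetCard_univ.mp y.2
  set e : Fin K ↪o Fin N := Finset.orderEmbOfFin y.1 hcy with he
  have himage : ∀ π : Equiv.Perm (Fin K), Finset.image (⇑e ∘ ⇑π) Finset.univ = y.1 := by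
    intro π
    apply Finset.eq_of_subset_of_card_le
    · intro x hx
      obtain ⟨k, _, rfl⟩ := Finset.mem_image.mp hx
      exact Finset.orderEmbOfFin_mem y.1 hcy (π k)
    · rw [Finset.card_image_of_injective _ (e.injective.comp π.injective),
        Finset.card_univ, Fintype.card_fin, hcy]
  have hmemfiber : ∀ π : Equiv.Perm (Fin K),
      (⇑e ∘ ⇑π) ∈ (Finset.univ.filter
        (fun f : Fin K → Fin N => Function.Injective f)).filter (fun f => g f = y) := by
    intro π
    have hinj : Function.Injective (⇑e ∘ ⇑π) := e.injective.comp π.injective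
    refine Finset.mem_filter.mpr ⟨Finset.mem_filter.mpr ⟨Finset.mem_univ _, hinj⟩, ?_⟩
    rw [hg]
    simp only [dif_pos hinj]
    exact Subtype.ext (himage π)
  refine Finset.sum_bij' (i := fun f hf => ?_) (j := fun π _ => ⇑e ∘ ⇑π) ?_ ?_ ?_ ?_ ?_
  · have hf' := Finset.mem_filter.mp hf
    have hfi : Function.Injective f := (Finset.mem_filter.mp hf'.1).2
    have hfs : Finset.image f Finset.univ = y.1 := by
      have := hf'.2
      rw [hg] at this
      simp only [dif_pos hfi] at this
      exact congrArg Subtype.val this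
    refine Equiv.ofBijective (fun k => (Finset.orderIsoOfFin y.1 hcy).symm
      ⟨f k, by rw [← hfs]; exact Finset.mem_image_of_mem f (Finset.mem_univ k)⟩) ?_
    rw [Fintype.bijective_iff_injective_and_card]
    refine ⟨fun a b hab => ?_, rfl⟩
    have := congrArg (fun z => ((Finset.orderIsoOfFin y.1 hcy) z : Fin N)) hab
    simp only [OrderIso.apply_symm_apply] at this
    exact hfi this
  · intro f hf; exact Finset.mem_univ _
  · intro π hπ; exact hmemfiber π
  · intro f hf
    funext k
    simp only [Function.comp_apply, Equiv.ofBijective_apply]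
    rw [he, ← Finset.coe_orderIsoOfFin_apply, OrderIso.apply_symm_apply]
  · intro π hπ
    ext k
    simp only [Equiv.ofBijective_apply]
    have : (⟨(⇑e ∘ ⇑π) k, by rw [← himage π]; exact Finset.mem_image_of_mem _ (Finset.mem_univ k)⟩
        : {x // x ∈ y.1}) = (Finset.orderIsoOfFin y.1 hcy) (π k) := by
      apply Subtype.ext
      simp [he, Finset.coe_orderIsoOfFin_apply]
    rw [this, OrderIso.symm_apply_apply]
  · intro f hf
    refine (congrArg T (funext fun k => ?_)).symm
    simp only [Function.comp_apply, Equiv.ofBijective_apply]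
    rw [he, ← Finset.coe_orderIsoOfFin_apply, OrderIso.apply_symm_apply]

theorem step4 {K N : ℕ} (C : Matrix (Fin K) (Fin N) ℂ) (e : Fin K ↪o Fin N) :
    ∑ π : Equiv.Perm (Fin K),
        (∏ i, C i (e (π i))) * (C.conjTranspose.submatrix (⇑e ∘ ⇑π) id).det
      = ((‖(C.submatrix id ⇑e).det‖ ^ 2 : ℝ) : ℂ) := by
  have hD : (C.conjTranspose.submatrix ⇑e id).det = star (C.submatrix id ⇑e).det := by
    rw [← Matrix.det_conjTranspose, Matrix.conjTranspose_submatrix]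
  have h1 : ∀ π : Equiv.Perm (Fin K),
      (C.conjTranspose.submatrix (⇑e ∘ ⇑π) id).det
        = (Equiv.Perm.sign π : ℂ) * star (C.submatrix id ⇑e).det := by
    intro π
    have : C.conjTranspose.submatrix (⇑e ∘ ⇑π) id
        = (C.conjTranspose.submatrix ⇑e id).submatrix ⇑π id := by
      rw [Matrix.submatrix_submatrix]; rfl
    rw [this, Matrix.det_permute, hD]
  have h2 : (C.submatrix id ⇑e).transpose.det
      = ∑ π : Equiv.Perm (Fin K), (Equiv.Perm.sign π : ℂ) * ∏ i, C i (e (π i)) := by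
    rw [Matrix.det_apply']
    exact Finset.sum_congr rfl fun π _ => by simp [Matrix.transpose_apply]
  calc ∑ π : Equiv.Perm (Fin K),
        (∏ i, C i (e (π i))) * (C.conjTranspose.submatrix (⇑e ∘ ⇑π) id).det
      = (∑ π : Equiv.Perm (Fin K), (Equiv.Perm.sign π : ℂ) * ∏ i, C i (e (π i)))
          * star (C.submatrix id ⇑e).det := by
        rw [Finset.sum_mul]
        exact Finset.sum_congr rfl fun π _ => by rw [h1 π]; ring
    _ = (C.submatrix id ⇑e).det * star (C.submatrix id ⇑e).det := by
        rw [← h2, Matrix.det_transpose]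
    _ = ((‖(C.submatrix id ⇑e).det‖ ^ 2 : ℝ) : ℂ) := by
        rw [show star (C.submatrix id ⇑e).det = (starRingEnd ℂ) (C.submatrix id ⇑e).det from rfl]
        rw [Complex.mul_conj, Complex.normSq_eq_norm_sq]

theorem cauchyBinet {K N : ℕ} (hKN : K ≤ N) (C : Matrix (Fin K) (Fin N) ℂ) :
    (C * C.conjTranspose).det
      = ∑ s ∈ (Finset.powersetCard K (Finset.univ : Finset (Fin N))).attach,
          ((‖(C.submatrix id
              ⇑(Finset.orderEmbOfFin s.1 (Finset.mem_powersetCard_univ.mp s.2))).det‖ ^ 2 : ℝ)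
            : ℂ) := by
  refine ((step1 C).trans ((step2 C).trans ((step3 hKN
    (fun f => (∏ i, C i (f i)) * (C.conjTranspose.submatrix f id).det)).trans ?_)))
  refine Finset.sum_congr rfl fun s _ => ?_
  refine Eq.trans ?_ (step4 C (Finset.orderEmbOfFin s.1 (Finset.mem_powersetCard_univ.mp s.2)))
  exact Finset.sum_congr rfl fun π _ => by simp only [Function.comp_apply]

theorem step0 {M N K : ℕ} (hKM : K ≤ M)
    (A : Matrix (Fin M) (Fin N) ℂ) (U : Matrix (Fin M) (Fin M) ℂ)
    (hU : U.conjTranspose * U = 1)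
    (σ : Fin M → ℝ)
    (hsvd : ∀ i : Fin M,
      (A * A.conjTranspose).mulVec (fun j => U j i) = fun j => ((σ i ^ 2 : ℝ) : ℂ) * U j i) :
    ((U.conjTranspose * A).submatrix (Fin.castLE hKM) id) *
      ((U.conjTranspose * A).submatrix (Fin.castLE hKM) id).conjTranspose
    = Matrix.diagonal (fun i : Fin K => ((σ (Fin.castLE hKM i) ^ 2 : ℝ) : ℂ)) := by
  set W := U.conjTranspose * A with hW
  have hAU : A * A.conjTranspose * U
      = U * Matrix.diagonal (fun i => ((σ i ^ 2 : ℝ) : ℂ)) := by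
    ext j i
    have h := congrFun (hsvd i) j
    simp only [Matrix.mulVec, dotProduct] at h
    rw [Matrix.mul_diagonal, Matrix.mul_apply]
    rw [h]
    ring
  have hWW : W * W.conjTranspose
      = Matrix.diagonal (fun i => ((σ i ^ 2 : ℝ) : ℂ)) := by
    rw [hW, Matrix.conjTranspose_mul, Matrix.conjTranspose_conjTranspose]
    calc U.conjTranspose * A * (A.conjTranspose * U)
        = U.conjTranspose * (A * A.conjTranspose * U) := by
          simp only [Matrix.mul_assoc]
      _ = U.conjTranspose * (U * Matrix.diagonal (fun i => ((σ i ^ 2 : ℝ) : ℂ))) := by rw [hAU]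
      _ = (U.conjTranspose * U) * Matrix.diagonal (fun i => ((σ i ^ 2 : ℝ) : ℂ)) := by
          rw [Matrix.mul_assoc]
      _ = _ := by rw [hU, Matrix.one_mul]
  have hsub : (W.submatrix (Fin.castLE hKM) id) *
      (W.submatrix (Fin.castLE hKM) id).conjTranspose
      = (W * W.conjTranspose).submatrix (Fin.castLE hKM) (Fin.castLE hKM) := by
    ext i j
    simp [Matrix.mul_apply, Matrix.conjTranspose_apply, Matrix.submatrix_apply]
  rw [hsub, hWW]
  ext i j
  rcases eq_or_ne i j with rfl | hij
  · simp [Matrix.diagonal_apply_eq]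
  · have : Fin.castLE hKM i ≠ Fin.castLE hKM j := fun h => hij (Fin.castLE_injective hKM h)
    simp [Matrix.submatrix_apply, Matrix.diagonal_apply_ne _ this, Matrix.diagonal_apply_ne _ hij]

theorem numeric {K N : ℕ} (hK : 1 ≤ K) (hKN : K ≤ N) :
    Real.exp (-(1 / 2)) * Real.sqrt ((K : ℝ) / N)
      ≤ (N.choose K : ℝ) ^ (-(1 : ℝ) / (2 * K)) := by
  have hK0 : (0:ℝ) < K := by exact_mod_cast hK
  have hN0 : (0:ℝ) < N := by exact_mod_cast lt_of_lt_of_le (by exact_mod_cast hK) hKN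
  have hc0 : (0:ℝ) < N.choose K := by exact_mod_cast Nat.choose_pos hKN
  have hfac : (0:ℝ) < K.factorial := by exact_mod_cast K.factorial_pos
  have h1 : (N.choose K : ℝ) ≤ (N:ℝ) ^ K / K.factorial := by
    have := Nat.choose_le_pow_div (α := ℝ) K N
    push_cast at this ⊢
    exact this
  have h2 : (K:ℝ) ^ K ≤ Real.exp K * K.factorial := by
    have hs := Real.sum_le_exp_of_nonneg hK0.le (K+1)
    have hsingle : (K:ℝ) ^ K / K.factorial
        ≤ ∑ i ∈ Finset.range (K+1), (K:ℝ) ^ i / i.factorial :=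
      Finset.single_le_sum (f := fun i => (K:ℝ) ^ i / i.factorial)
        (fun i _ => by positivity) (Finset.self_mem_range_succ K)
    have := hsingle.trans hs
    rw [div_le_iff₀ hfac] at this
    linarith
  have h3 : (N.choose K : ℝ) ≤ Real.exp K * ((N:ℝ) / K) ^ K := by
    refine h1.trans ?_
    rw [div_pow, ← mul_div_assoc, div_le_div_iff₀ hfac (by positivity)]
    calc (N:ℝ) ^ K * (K:ℝ) ^ K ≤ (N:ℝ) ^ K * (Real.exp K * K.factorial) := by
          exact mul_le_mul_of_nonneg_left h2 (by positivity)
      _ = Real.exp K * (N:ℝ) ^ K * K.factorial := by ring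
  have h4 : (N.choose K : ℝ) ^ ((1:ℝ) / (2 * K))
      ≤ Real.exp (1/2) * Real.sqrt ((N:ℝ) / K) := by
    have hr := Real.rpow_le_rpow hc0.le h3 (by positivity : (0:ℝ) ≤ 1 / (2 * K))
    refine hr.trans_eq ?_
    rw [Real.mul_rpow (Real.exp_pos _).le (by positivity)]
    congr 1
    · rw [← Real.exp_mul]
      congr 1
      field_simp
    · rw [← Real.rpow_natCast ((N:ℝ)/K) K, ← Real.rpow_mul (by positivity),
        Real.sqrt_eq_rpow]
      congr 1
      field_simp
  have key : (Real.exp (1/2) * Real.sqrt ((N:ℝ)/K))⁻¹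
      ≤ ((N.choose K : ℝ) ^ ((1:ℝ) / (2 * K)))⁻¹ := by
    apply inv_anti₀ (Real.rpow_pos_of_pos hc0 _) h4
  have hL : Real.exp (-(1 / 2)) * Real.sqrt ((K : ℝ) / N)
      = (Real.exp (1/2) * Real.sqrt ((N:ℝ)/K))⁻¹ := by
    rw [mul_inv, Real.exp_neg, ← Real.sqrt_inv, inv_div]
  have hR : (N.choose K : ℝ) ^ (-(1 : ℝ) / (2 * K))
      = ((N.choose K : ℝ) ^ ((1:ℝ) / (2 * K)))⁻¹ := by
    rw [show (-(1:ℝ)) / (2 * K) = -((1:ℝ)/(2*K)) by ring, Real.rpow_neg hc0.le]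
  rw [hL, hR]
  exact key

end ProjDet

/-- let `A` be an `M × N` complex matrix with singular values
`σ₁ ≥ … ≥ σ_M` (padded with zeros beyond `min M N`), given by a unitary `U` whose columns
are the left singular vectors (eigenvectors of `A Aᴴ` with eigenvalues `σ i ^ 2`).
Projecting onto the span of the top `K` left singular vectors, i.e. taking `C` to be the
first `K` rows of `Uᴴ A`, there is a choice of `K` columns `c` such that the `K × K`
matrix `B = C|_c` satisfies
`|det B|^{1/K} ≥ (N choose K)^{-1/(2K)} (∏_{i<K} σ i)^{1/K}
             ≥ e^{-1/2} √(K/N) (∏_{i<K} σ i)^{1/K}`. -/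
theorem projected_determinant (M N K : ℕ) (hK : 1 ≤ K) (hKM : K ≤ M) (hKN : K ≤ N)
    (A : Matrix (Fin M) (Fin N) ℂ)
    (U : Matrix (Fin M) (Fin M) ℂ)
    (hU : U * U.conjTranspose = 1 ∧ U.conjTranspose * U = 1)
    (σ : Fin M → ℝ) (hσ0 : ∀ i, 0 ≤ σ i)
    (hmono : ∀ i j : Fin M, i ≤ j → σ j ≤ σ i)
    (hsvd : ∀ i : Fin M,
      (A * A.conjTranspose).mulVec (fun j => U j i) = fun j => ((σ i ^ 2 : ℝ) : ℂ) * U j i) :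
    ∃ c : Fin K → Fin N, Function.Injective c ∧
      ((N.choose K : ℝ) ^ (-(1 : ℝ) / (2 * K))) *
          ((∏ i : Fin K, σ (Fin.castLE hKM i)) ^ ((1 : ℝ) / K))
        ≤ ‖(((U.conjTranspose * A).submatrix (Fin.castLE hKM) c)).det‖ ^ ((1 : ℝ) / K) ∧
      Real.exp (-(1 / 2)) * Real.sqrt ((K : ℝ) / N) *
          ((∏ i : Fin K, σ (Fin.castLE hKM i)) ^ ((1 : ℝ) / K))
        ≤ ((N.choose K : ℝ) ^ (-(1 : ℝ) / (2 * K))) *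
            ((∏ i : Fin K, σ (Fin.castLE hKM i)) ^ ((1 : ℝ) / K)) := by
  classical
  set C := (U.conjTranspose * A).submatrix (Fin.castLE hKM) id with hC
  set P := ∏ i : Fin K, σ (Fin.castLE hKM i) with hP
  have hP0 : 0 ≤ P := Finset.prod_nonneg fun i _ => hσ0 _
  have hK0 : (0:ℝ) < K := by exact_mod_cast hK
  have hc0 : (0:ℝ) < N.choose K := by exact_mod_cast Nat.choose_pos hKN
  have hdiag := ProjDet.step0 hKM A U hU.2 σ hsvd
  have hdet : (C * C.conjTranspose).det = ((P ^ 2 : ℝ) : ℂ) := by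
    rw [hC, hdiag, Matrix.det_diagonal, hP]
    push_cast
    rw [Finset.prod_pow]
  have hcb := ProjDet.cauchyBinet hKN C
  rw [hdet] at hcb
  have hsum : ∑ s ∈ (Finset.powersetCard K (Finset.univ : Finset (Fin N))).attach,
      ‖(C.submatrix id
        ⇑(Finset.orderEmbOfFin s.1 (Finset.mem_powersetCard_univ.mp s.2))).det‖ ^ 2
      = P ^ 2 := by
    have := hcb
    push_cast at this
    exact_mod_cast this.symm
  have hAne : ((Finset.powersetCard K (Finset.univ : Finset (Fin N))).attach).Nonempty := by
    rw [Finset.attach_nonempty_iff]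
    obtain ⟨s, hs⟩ := Finset.exists_subset_card_eq (by simpa using hKN :
      K ≤ (Finset.univ : Finset (Fin N)).card)
    exact ⟨s, Finset.mem_powersetCard.mpr ⟨hs.1, hs.2⟩⟩
  have hcard : ((Finset.powersetCard K (Finset.univ : Finset (Fin N))).attach).card
      = N.choose K := by
    rw [Finset.card_attach, Finset.card_powersetCard, Finset.card_univ, Fintype.card_fin]
  obtain ⟨s, _, hs⟩ := Finset.exists_le_of_sum_le hAne (by
    rw [Finset.sum_const, hcard, nsmul_eq_mul, mul_div_cancel₀ _ (ne_of_gt hc0), hsum] :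
    ∑ _s ∈ (Finset.powersetCard K (Finset.univ : Finset (Fin N))).attach,
        P ^ 2 / (N.choose K : ℝ)
      ≤ ∑ s ∈ (Finset.powersetCard K (Finset.univ : Finset (Fin N))).attach,
        ‖(C.submatrix id
          ⇑(Finset.orderEmbOfFin s.1 (Finset.mem_powersetCard_univ.mp s.2))).det‖ ^ 2)
  set e := Finset.orderEmbOfFin s.1 (Finset.mem_powersetCard_univ.mp s.2) with hee
  have hBB : (U.conjTranspose * A).submatrix (Fin.castLE hKM) ⇑e = C.submatrix id ⇑e := by
    ext i j
    rfl
  refine ⟨⇑e, e.injective, ?_, ?_⟩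
  · -- main inequality
    rw [hBB]
    set D := ‖(C.submatrix id ⇑e).det‖ with hD
    have hD0 : 0 ≤ D := norm_nonneg _
    have h5 : (N.choose K : ℝ) ^ (-(1/2) : ℝ) * P ≤ D := by
      have hsq := Real.sqrt_le_sqrt hs
      rw [Real.sqrt_div (sq_nonneg P), Real.sqrt_sq hP0, Real.sqrt_sq hD0] at hsq
      have heq : P / Real.sqrt (N.choose K : ℝ)
          = (N.choose K : ℝ) ^ (-(1/2) : ℝ) * P := by
        rw [Real.sqrt_eq_rpow, Real.rpow_neg hc0.le]
        ring
      rwa [heq] at hsq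
    have h6 := Real.rpow_le_rpow (by positivity) h5 (by positivity : (0:ℝ) ≤ 1 / K)
    rw [Real.mul_rpow (by positivity) hP0, ← Real.rpow_mul hc0.le] at h6
    have hexp : (-(1/2) : ℝ) * (1 / K) = -(1:ℝ) / (2 * K) := by
      field_simp
    rwa [hexp] at h6
  · exact mul_le_mul_of_nonneg_right (ProjDet.numeric hK hKN)
      (Real.rpow_nonneg hP0 _)

end
end
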